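/- arXiv:hep-th/0601172 — 2 statements merged into one kernel-verified Lean document; each statement's English description precedes it below -/
import Mathlib

section
/- The Riemannian (pseudo-Riemannian) metric on ℝ³ given by ds² = 2v·e^{-y₁}dy₁dy₃ + q·e^{-2y₁}dy₂² (q,v nonzero constants) is flat: its Riemann curvature tensor vanishes identically. -/
/-!
Direct computation, with the coordinates indexed 0, 1, 2. The metric depends on `y 0` only and its
inverse is read off from its anti-diagonal shape. The only nonzero Christoffel symbols are
`Γ⁰₀₀ = Γ¹₀₁ = Γ¹₁₀ = -1` and `Γ²₁₁ = (q/v) e^{-y₀}`. Hence the only nonzero derivative is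
`∂₀Γ²₁₁ = -Γ²₁₁`. It enters only `R²₁₀₁ = -R²₁₁₀`, where it is cancelled by the quadratic term
`-Γ²₁₁Γ¹₀₁`; all other quadratic terms cancel in pairs.
-/

open Real Matrix

noncomputable section

/-- Partial derivative of a scalar function on ℝ³ in the i-th coordinate direction. -/
def pd (i : Fin 3) (f : (Fin 3 → ℝ) → ℝ) (y : Fin 3 → ℝ) : ℝ :=
  fderiv ℝ f y (Pi.single i 1)

/-- Christoffel symbols Γ^k_{ij} of the Levi-Civita connection of the metric g. -/
def christoffel (g : (Fin 3 → ℝ) → Matrix (Fin 3) (Fin 3) ℝ) (k i j : Fin 3)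
    (y : Fin 3 → ℝ) : ℝ :=
  (1/2) * ∑ l, (g y)⁻¹ k l *
    (pd i (fun z => g z l j) y + pd j (fun z => g z l i) y - pd l (fun z => g z i j) y)

/-- Riemann curvature tensor R^l_{kij}. -/
def riemann (g : (Fin 3 → ℝ) → Matrix (Fin 3) (Fin 3) ℝ) (l k i j : Fin 3)
    (y : Fin 3 → ℝ) : ℝ :=
  pd i (christoffel g l j k) y - pd j (christoffel g l i k) y
  + ∑ m, (christoffel g l i m y * christoffel g m j k y
        - christoffel g l j m y * christoffel g m i k y)

/-- Ricci tensor R_{ij} = R^k_{ikj}. -/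
def ricci (g : (Fin 3 → ℝ) → Matrix (Fin 3) (Fin 3) ℝ) (i j : Fin 3)
    (y : Fin 3 → ℝ) : ℝ :=
  ∑ k, riemann g k i k j y

/-- Scalar (Gauss) curvature R = g^{ij} R_{ij}. -/
def scalarCurv (g : (Fin 3 → ℝ) → Matrix (Fin 3) (Fin 3) ℝ) (y : Fin 3 → ℝ) : ℝ :=
  ∑ i, ∑ j, (g y)⁻¹ i j * ricci g i j y

/-- Covariant Hessian ∇ᵢ∇ⱼΦ = ∂ᵢ∂ⱼΦ - Γ^k_{ij} ∂ₖΦ. -/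
def covHess (g : (Fin 3 → ℝ) → Matrix (Fin 3) (Fin 3) ℝ) (Φ : (Fin 3 → ℝ) → ℝ)
    (i j : Fin 3) (y : Fin 3 → ℝ) : ℝ :=
  pd i (pd j Φ) y - ∑ k, christoffel g k i j y * pd k Φ y

/-- The (5|1) flat metric. -/
def G51 (q v : ℝ) (y : Fin 3 → ℝ) : Matrix (Fin 3) (Fin 3) ℝ :=
  !![0, 0, v * exp (-(y 0));
     0, q * exp (-2 * y 0), 0;
     v * exp (-(y 0)), 0, 0]

theorem pd_comp_apply {f : ℝ → ℝ} {f' : ℝ} {y : Fin 3 → ℝ} (i j : Fin 3)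
    (hf : HasDerivAt f f' (y j)) :
    pd i (fun z => f (z j)) y = if i = j then f' else 0 := by
  have h : HasFDerivAt (fun z : Fin 3 → ℝ => f (z j))
      (f' • ContinuousLinearMap.proj (R := ℝ) (φ := fun _ : Fin 3 => ℝ) j) y :=
    hf.comp_hasFDerivAt y (hasFDerivAt_apply j y)
  rw [pd, h.fderiv]
  simp [Pi.single_apply, eq_comm]

theorem pd_const (c : ℝ) (i : Fin 3) (y : Fin 3 → ℝ) : pd i (fun _ => c) y = 0 := by
  simp [pd]

theorem inv_antidiagonal {K : Type*} [Field K] {a b : K} (ha : a ≠ 0) (hb : b ≠ 0) :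
    (!![0, 0, a; 0, b, 0; a, 0, 0])⁻¹ = !![0, 0, a⁻¹; 0, b⁻¹, 0; a⁻¹, 0, 0] := by
  refine Matrix.inv_eq_right_inv ?_
  ext i j
  fin_cases i <;> fin_cases j <;> simp [Matrix.mul_apply, Fin.sum_univ_three, ha, hb]

theorem pd_G51_apply (q v : ℝ) (i a b : Fin 3) (y : Fin 3 → ℝ) :
    pd i (fun z => G51 q v z a b) y =
      if i = 0 then
        !![0, 0, -(v * exp (-(y 0))); 0, -2 * (q * exp (-2 * y 0)), 0; -(v * exp (-(y 0))), 0, 0] a b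
      else 0 := by
  have hexp (c k : ℝ) : HasDerivAt (fun t => c * exp (k * t)) (k * (c * exp (k * y 0))) (y 0) := by
    have := ((hasDerivAt_id (y 0)).const_mul k).exp.const_mul c
    simpa [mul_comm, mul_assoc, mul_left_comm] using this
  refine pd_comp_apply (f := fun t => G51 q v (fun _ => t) a b) i 0 ?_
  fin_cases a <;> fin_cases b <;> simp [G51]
  all_goals first
    | exact hasDerivAt_const _ _
    | simpa using hexp v (-1)
    | simpa using hexp q (-2)

theorem inv_G51 {q v : ℝ} (hq : q ≠ 0) (hv : v ≠ 0) (y : Fin 3 → ℝ) :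
    (G51 q v y)⁻¹ =
      !![0, 0, (v * exp (-(y 0)))⁻¹; 0, (q * exp (-2 * y 0))⁻¹, 0; (v * exp (-(y 0)))⁻¹, 0, 0] :=
  inv_antidiagonal (by positivity) (by positivity)

def christoffelG51 (q v : ℝ) (k i j : Fin 3) (y : Fin 3 → ℝ) : ℝ :=
  if (k = 0 ∧ i = 0 ∧ j = 0) ∨ (k = 1 ∧ i = 0 ∧ j = 1) ∨ (k = 1 ∧ i = 1 ∧ j = 0) then -1
  else if k = 2 ∧ i = 1 ∧ j = 1 then q / v * exp (-(y 0)) else 0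

theorem christoffel_G51 {q v : ℝ} (hq : q ≠ 0) (hv : v ≠ 0) (k i j : Fin 3) :
    christoffel (G51 q v) k i j = christoffelG51 q v k i j := by
  funext y
  have hsq : exp (-2 * y 0) = exp (-(y 0)) ^ 2 := by rw [← exp_nat_mul]; ring_nf
  simp only [christoffel, inv_G51 hq hv, pd_G51_apply, Fin.sum_univ_three, hsq]
  fin_cases k <;> fin_cases i <;> fin_cases j <;> simp [christoffelG51]
  all_goals field_simp
  ring

theorem pd_christoffelG51 (q v : ℝ) (k i j m : Fin 3) (y : Fin 3 → ℝ) :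
    pd m (christoffelG51 q v k i j) y =
      if k = 2 ∧ i = 1 ∧ j = 1 ∧ m = 0 then -(q / v * exp (-(y 0))) else 0 := by
  unfold christoffelG51
  by_cases hconst : (k = 0 ∧ i = 0 ∧ j = 0) ∨ (k = 1 ∧ i = 0 ∧ j = 1) ∨ (k = 1 ∧ i = 1 ∧ j = 0)
  · have hnot : ¬(k = 2 ∧ i = 1 ∧ j = 1 ∧ m = 0) := by omega
    simp only [hconst, if_true, hnot, if_false, pd_const]
  by_cases hvar : k = 2 ∧ i = 1 ∧ j = 1
  · have hderiv : HasDerivAt (fun t => q / v * exp (-t)) (-(q / v * exp (-(y 0)))) (y 0) := by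
      simpa using ((hasDerivAt_id (y 0)).neg.exp.const_mul (q / v))
    simp only [hvar, if_true, true_and]
    exact pd_comp_apply (f := fun t => q / v * exp (-t)) m 0 hderiv
  · simp only [hconst, if_false, hvar, pd_const]
    grind

theorem stmt_1 (q v : ℝ) (hq : q ≠ 0) (hv : v ≠ 0) :
    ∀ (l k i j : Fin 3) (y : Fin 3 → ℝ), riemann (G51 q v) l k i j y = 0 := by
  intro l k i j y
  simp only [riemann, christoffel_G51 hq hv, pd_christoffelG51, Fin.sum_univ_three]
  fin_cases l <;> fin_cases k <;> fin_cases i <;> fin_cases j <;> simp [christoffelG51]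
end
end

section
/- The coordinate change ξ₁=-e^{-y₁}, ξ₂=e^{-y₁}y₂, ξ₃=(q/(2v))e^{-y₁}y₂²+y₃ transforms the metric G₁₃=G₃₁=v e^{-y₁}, G₂₂=q e^{-2y₁} (other entries zero) into the constant metric with components G'₁₃=G'₃₁=v, G'₂₂=q, other entries zero; i.e., the pullback of the constant form under ξ equals G, equivalently (Dξ)ᵗ G' (Dξ) = G at every point. -/
open Real Matrix

noncomputable section

/-- Flat coordinates for the (5|1) metric. -/
def xi51 (q v : ℝ) (y : Fin 3 → ℝ) : Fin 3 → ℝ :=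
  ![-exp (-(y 0)), exp (-(y 0)) * y 1, q / (2 * v) * exp (-(y 0)) * (y 1) ^ 2 + y 2]


/-- Jacobian matrix of a map ℝ³ → ℝ³. -/
def jacobian (ξ : (Fin 3 → ℝ) → Fin 3 → ℝ) (y : Fin 3 → ℝ) : Matrix (Fin 3) (Fin 3) ℝ :=
  Matrix.of fun i j => pd j (fun z => ξ z i) y


/-- The constant metric G′. -/
def Gconst (q v : ℝ) : Matrix (Fin 3) (Fin 3) ℝ :=
  !![0, 0, v; 0, q, 0; v, 0, 0]

/-! The Jacobian of `ξ` is lower triangular with diagonal `(e^{-y₁}, e^{-y₁}, 1)`. In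
`(Dξ)ᵀ G' (Dξ)` the `(1,1)` and `(1,2)` entries vanish by cancellation: the contribution
`q ∂₁ξ₂ ∂ⱼξ₂` of the middle block is cancelled by `v (∂₁ξ₁ ∂ⱼξ₃ + ∂₁ξ₃ ∂ⱼξ₁)`, which is what
fixes the coefficient `q / (2v)` in `ξ₃`. -/

local notation "coord" i:max => (ContinuousLinearMap.proj i : (Fin 3 → ℝ) →L[ℝ] ℝ)

section FlatCoordinates

variable (q v : ℝ) (y : Fin 3 → ℝ)

lemma hasFDerivAt_exp_neg_apply_zero :
    HasFDerivAt (fun z : Fin 3 → ℝ => exp (-(z 0))) (-exp (-(y 0)) • coord 0) y :=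
  (hasFDerivAt_apply 0 y).neg.exp.congr_fderiv (by ext; simp)

lemma hasFDerivAt_xi51_zero :
    HasFDerivAt (fun z => xi51 q v z 0) (exp (-(y 0)) • coord 0) y :=
  (hasFDerivAt_exp_neg_apply_zero y).neg.congr_fderiv (by ext; simp)

lemma hasFDerivAt_xi51_one :
    HasFDerivAt (fun z => xi51 q v z 1)
      (exp (-(y 0)) • coord 1 - (exp (-(y 0)) * y 1) • coord 0) y :=
  ((hasFDerivAt_exp_neg_apply_zero y).mul (hasFDerivAt_apply 1 y)).congr_fderiv <| by
    ext
    simp only [_root_.add_apply, _root_.sub_apply, _root_.smul_apply,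
      ContinuousLinearMap.proj_apply, smul_eq_mul]
    ring

lemma hasFDerivAt_xi51_two :
    HasFDerivAt (fun z => xi51 q v z 2)
      ((q / v * exp (-(y 0)) * y 1) • coord 1 - (q / (2 * v) * exp (-(y 0)) * y 1 ^ 2) • coord 0
        + coord 2) y :=
  ((((hasFDerivAt_exp_neg_apply_zero y).const_mul (q / (2 * v))).mul
    ((hasFDerivAt_apply 1 y).pow 2)).add (hasFDerivAt_apply 2 y)).congr_fderiv <| by
    ext
    simp only [_root_.add_apply, _root_.sub_apply, _root_.smul_apply,
      ContinuousLinearMap.proj_apply, smul_eq_mul, nsmul_eq_mul]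
    ring

lemma jacobian_xi51 :
    jacobian (xi51 q v) y =
      !![exp (-(y 0)), 0, 0;
         -(exp (-(y 0)) * y 1), exp (-(y 0)), 0;
         -(q / (2 * v) * exp (-(y 0)) * y 1 ^ 2), q / v * exp (-(y 0)) * y 1, 1] := by
  ext i j
  fin_cases i <;> fin_cases j <;>
    simp [jacobian, pd, (hasFDerivAt_xi51_zero q v y).fderiv,
      (hasFDerivAt_xi51_one q v y).fderiv, (hasFDerivAt_xi51_two q v y).fderiv]

end FlatCoordinates

theorem stmt_2_general (q v : ℝ) (hv : v ≠ 0) (y : Fin 3 → ℝ) :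
    (jacobian (xi51 q v) y)ᵀ * Gconst q v * jacobian (xi51 q v) y = G51 q v y := by
  have hexp : exp (-2 * y 0) = exp (-(y 0)) ^ 2 := by
    rw [← Real.exp_nat_mul]; ring_nf
  rw [jacobian_xi51, G51, hexp]
  ext i j
  fin_cases i <;> fin_cases j <;>
    simp [Gconst, Matrix.mul_apply, Fin.sum_univ_three] <;> field_simp <;> ring

theorem stmt_2 (q v : ℝ) (hq : q ≠ 0) (hv : v ≠ 0) (y : Fin 3 → ℝ) :
    (jacobian (xi51 q v) y)ᵀ * Gconst q v * jacobian (xi51 q v) y = G51 q v y :=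
  stmt_2_general q v hv y
end
end
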